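/- arXiv:1702.07241 — 2 statements merged into one kernel-verified Lean document; each statement's English description precedes it below -/
import Mathlib

section
/- Let π be a probability measure on ℝᵈ, h ∈ L²(π) with mean π(h), and let φ solve the weak Poisson equation π(∇φ·∇ψ) = π((h − π(h))ψ) for all test functions ψ. Set K = ∇φ and u = −(1/2)K(h + π(h)). Then for every smooth compactly supported f: (i) π(K·∇f) = π(fh) − π(f)π(h); and (ii) π(u·∇f) + (1/2)π(K·∇(K·∇f)) = −(π(fh) − π(f)π(h))π(h). -/
open MeasureTheory Finset

noncomputable section

/-- The gradient of a scalar function on `ℝᵈ`. -/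
def grad {d : ℕ} (f : (Fin d → ℝ) → ℝ) (x : Fin d → ℝ) : Fin d → ℝ :=
  fun i => fderiv ℝ f x (Pi.single i 1)

/-- Let `φ` solve the weak Poisson equation
`π(∇φ·∇ψ) = π((h−π(h))ψ)` for all test functions `ψ`, set `K = ∇φ` and
`u = −(1/2)K(h+π(h))`. Then for every smooth compactly supported `f`:
(i) `π(K·∇f) = π(fh) − π(f)π(h)`, and
(ii) `π(u·∇f) + (1/2)π(K·∇(K·∇f)) = −(π(fh) − π(f)π(h))π(h)`. -/
theorem fpf_exactness_identities
    {d : ℕ} (π : Measure (Fin d → ℝ)) [IsProbabilityMeasure π]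
    (h φ : (Fin d → ℝ) → ℝ) (hφ : ContDiff ℝ 2 φ)
    (hhint : Integrable h π)
    (hweak : ∀ ψ : (Fin d → ℝ) → ℝ, ContDiff ℝ 1 ψ →
      ∫ x, (∑ i, grad φ x i * grad ψ x i) ∂π
        = ∫ x, (h x - ∫ y, h y ∂π) * ψ x ∂π) :
    ∀ f : (Fin d → ℝ) → ℝ, ContDiff ℝ (⊤ : ℕ∞) f → HasCompactSupport f →
    Integrable f π → Integrable (fun x => f x * h x) π →
    Integrable (fun x => ∑ i, grad φ x i * grad f x i) π →
    Integrable (fun x => h x * ∑ i, grad φ x i * grad f x i) π →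
    (∫ x, (∑ i, grad φ x i * grad f x i) ∂π
        = (∫ x, f x * h x ∂π) - (∫ x, f x ∂π) * (∫ x, h x ∂π)) ∧
    ((∫ x, (∑ i, (-(1 / 2) * (h x + ∫ y, h y ∂π) * grad φ x i) * grad f x i) ∂π)
        + (1 / 2) * ∫ x, (∑ i, grad φ x i *
            grad (fun y => ∑ j, grad φ y j * grad f y j) x i) ∂π
      = -((∫ x, f x * h x ∂π) - (∫ x, f x ∂π) * (∫ x, h x ∂π))
          * (∫ x, h x ∂π)) := by
  intro f hf hfc hfint hfhint hgint hhgint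
  set m : ℝ := ∫ y, h y ∂π with hm
  -- regularity of the gradients
  have hKi : ∀ i : Fin d, ContDiff ℝ 1 (fun x => grad φ x i) := by
    intro i
    exact (hφ.fderiv_right (by norm_num)).clm_apply contDiff_const
  have hfi : ∀ i : Fin d, ContDiff ℝ 1 (fun x => grad f x i) := by
    intro i
    exact (hf.fderiv_right (WithTop.coe_le_coe.mpr le_top)).clm_apply contDiff_const
  have hg : ContDiff ℝ 1 (fun x => ∑ i, grad φ x i * grad f x i) :=
    ContDiff.sum fun i _ => (hKi i).mul (hfi i)
  -- identity (i)
  have key1 := hweak f (hf.of_le (by simp))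
  have e1 : ∫ x, (h x - m) * f x ∂π
      = (∫ x, f x * h x ∂π) - (∫ x, f x ∂π) * m := by
    have : ∀ x, (h x - m) * f x = f x * h x - m * f x := by intro x; ring
    simp only [this]
    rw [integral_sub hfhint (hfint.const_mul m), integral_const_mul]
    ring
  have keyI : ∫ x, (∑ i, grad φ x i * grad f x i) ∂π
      = (∫ x, f x * h x ∂π) - (∫ x, f x ∂π) * m := by
    rw [key1, e1]
  refine ⟨keyI, ?_⟩
  -- identity (ii)
  have key2 := hweak (fun x => ∑ i, grad φ x i * grad f x i) hg
  have e2 : ∫ x, (h x - m) * (∑ i, grad φ x i * grad f x i) ∂π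
      = (∫ x, h x * ∑ i, grad φ x i * grad f x i ∂π)
        - m * ∫ x, (∑ i, grad φ x i * grad f x i) ∂π := by
    have : ∀ x, (h x - m) * (∑ i, grad φ x i * grad f x i)
        = h x * (∑ i, grad φ x i * grad f x i)
          - m * (∑ i, grad φ x i * grad f x i) := by intro x; ring
    simp only [this]
    rw [integral_sub hhgint (hgint.const_mul m), integral_const_mul]
  -- rewrite the first integral of (ii)
  have e3 : ∀ x, (∑ i, (-(1 / 2) * (h x + m) * grad φ x i) * grad f x i)
      = -(1 / 2) * (h x * ∑ i, grad φ x i * grad f x i)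
        + (-(1 / 2) * m) * (∑ i, grad φ x i * grad f x i) := by
    intro x
    simp only [mul_assoc]
    rw [← Finset.mul_sum, ← Finset.mul_sum]
    ring
  have e4 : ∫ x, (∑ i, (-(1 / 2) * (h x + m) * grad φ x i) * grad f x i) ∂π
      = -(1 / 2) * (∫ x, h x * ∑ i, grad φ x i * grad f x i ∂π)
        + (-(1 / 2) * m) * ∫ x, (∑ i, grad φ x i * grad f x i) ∂π := by
    simp only [e3]
    rw [integral_add (hhgint.const_mul _) (hgint.const_mul _),
      integral_const_mul, integral_const_mul]
  rw [e4, key2, e2, keyI]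
  ring
end
end

section
/- Consider the deterministic linear Fokker–Planck dynamics associated with the deterministic EnKBF in the mean-field limit for a linear Gaussian model: if m_t and Σ_t denote the mean and covariance of the law of X_t^i evolving as dX_t^i = A X_t^i dt + σ dB_t^i + Σ_t Hᵀ(dZ_t − (H X_t^i + H m_t)/2 dt), then m_t and Σ_t satisfy the Kalman–Bucy equations dm_t = A m_t dt + Σ_t Hᵀ(dZ_t − H m_t dt) and dΣ_t/dt = AΣ_t + Σ_t Aᵀ + σσᵀ − Σ_t Hᵀ H Σ_t. -/
open MeasureTheory Finset Matrix

noncomputable section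

lemma integral_affine' {d : ℕ} (μ : Measure (Fin d → ℝ)) [IsProbabilityMeasure μ]
    (hint : ∀ k, Integrable (fun x : Fin d → ℝ => x k) μ) (c : ℝ) (D : Fin d → ℝ) :
    ∫ x, (c + ∑ k, D k * x k) ∂μ = c + ∑ k, D k * ∫ x, x k ∂μ := by
  rw [integral_add (integrable_const c)
    (integrable_finset_sum _ fun k _ => (hint k).const_mul _),
    integral_finset_sum _ fun k _ => (hint k).const_mul _]
  simp [integral_const_mul]

lemma integral_affine_mul {d : ℕ} (μ : Measure (Fin d → ℝ)) [IsProbabilityMeasure μ]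
    (hint1 : ∀ k, Integrable (fun x : Fin d → ℝ => x k) μ)
    (hint2 : ∀ k j, Integrable (fun x : Fin d → ℝ => x k * x j) μ)
    (c : ℝ) (D : Fin d → ℝ) (j : Fin d) :
    ∫ x, (c + ∑ k, D k * x k) * x j ∂μ
      = c * (∫ x, x j ∂μ) + ∑ k, D k * ∫ x, x k * x j ∂μ := by
  have : ∀ x : Fin d → ℝ, (c + ∑ k, D k * x k) * x j
      = c * x j + ∑ k, D k * (x k * x j) := by
    intro x; rw [add_mul, Finset.sum_mul]; ring_nf
  simp_rw [this]
  rw [integral_add ((hint1 j).const_mul c)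
    (integrable_finset_sum _ fun k _ => (hint2 k j).const_mul _),
    integral_finset_sum _ fun k _ => (hint2 k j).const_mul _]
  simp [integral_const_mul]

/-- Mean-field consistency of the deterministic EnKBF for a linear
Gaussian model, stated through the moment equations of the associated Fokker–Planck
dynamics (the formal ODE model with observation signal `Y_t = dZ_t/dt`): if the
first and second moments of the law `μ t` of `X_tⁱ` evolve according to the drift
`b_t(x) = A x + Σ_t Hᵀ (Y_t − (Hx + Hm_t)/2)` together with the diffusion
contribution `σσᵀ` for the second moments, then the mean `m_t` and covariance `Σ_t`
satisfy the Kalman–Bucy equations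
`dm/dt = A m + Σ Hᵀ(Y − H m)` and `dΣ/dt = AΣ + ΣAᵀ + σσᵀ − ΣHᵀHΣ`. -/
theorem deterministic_enkbf_mean_field_kalman_bucy
    {d m : ℕ} (A : Matrix (Fin d) (Fin d) ℝ) (H : Matrix (Fin m) (Fin d) ℝ)
    (σ : Matrix (Fin d) (Fin d) ℝ)
    (μ : ℝ → Measure (Fin d → ℝ)) (hμ : ∀ t, IsProbabilityMeasure (μ t))
    (Y : ℝ → Fin m → ℝ)
    (hint1 : ∀ t i, Integrable (fun x : Fin d → ℝ => x i) (μ t))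
    (hint2 : ∀ t i j, Integrable (fun x : Fin d → ℝ => x i * x j) (μ t)) :
    let mt : ℝ → Fin d → ℝ := fun t i => ∫ x, x i ∂(μ t)
    let St : ℝ → Matrix (Fin d) (Fin d) ℝ := fun t =>
      Matrix.of fun i j => ∫ x, (x i - mt t i) * (x j - mt t j) ∂(μ t)
    let b : ℝ → (Fin d → ℝ) → Fin d → ℝ := fun t x =>
      A.mulVec x + (St t * H.transpose).mulVec
        (fun a => Y t a - (H.mulVec x a + H.mulVec (mt t) a) / 2)
    -- Fokker–Planck moment equations for the particle law:
    (∀ t i, HasDerivAt (fun s => ∫ x, x i ∂(μ s)) (∫ x, b t x i ∂(μ t)) t) →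
    (∀ t i j, HasDerivAt (fun s => ∫ x, x i * x j ∂(μ s))
        ((∫ x, (b t x i * x j + x i * b t x j) ∂(μ t)) + (σ * σ.transpose) i j) t) →
    -- Kalman–Bucy equations for the conditional mean and covariance:
    (∀ t i, HasDerivAt (fun s => mt s i)
        ((A.mulVec (mt t) + (St t * H.transpose).mulVec
            (fun a => Y t a - H.mulVec (mt t) a)) i) t) ∧
    (∀ t i j, HasDerivAt (fun s => St s i j)
        ((A * St t + St t * A.transpose + σ * σ.transpose
            - St t * H.transpose * H * St t) i j) t) := by
  intro mt St b hyp1 hyp2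
  haveI : ∀ t, IsProbabilityMeasure (μ t) := hμ
  -- notation at a fixed time t
  -- covariance entries as moments
  have hSt : ∀ s i j, St s i j
      = (∫ x, x i * x j ∂(μ s)) - mt s i * mt s j := by
    intro s i j
    have hexp : ∀ x : Fin d → ℝ, (x i - mt s i) * (x j - mt s j)
        = x i * x j - (mt s i * x j + mt s j * x i - mt s i * mt s j) := by
      intro x; ring
    show (∫ x, (x i - mt s i) * (x j - mt s j) ∂(μ s)) = _
    simp_rw [hexp]
    have hIa : Integrable (fun x : Fin d → ℝ => mt s i * x j + mt s j * x i) (μ s) :=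
      ((hint1 s j).const_mul _).add ((hint1 s i).const_mul _)
    have hI : Integrable
        (fun x : Fin d → ℝ => mt s i * x j + mt s j * x i - mt s i * mt s j) (μ s) :=
      hIa.sub (integrable_const _)
    rw [integral_sub (hint2 s i j) hI, integral_sub hIa (integrable_const _),
      integral_add ((hint1 s j).const_mul _) ((hint1 s i).const_mul _)]
    simp [integral_const_mul, mt]
    ring
  -- product expansion helper
  have hmulexp : ∀ (c0 : ℝ) (D0 : Fin d → ℝ) (j : Fin d) (x : Fin d → ℝ),
      (c0 + ∑ k, D0 k * x k) * x j = c0 * x j + ∑ k, D0 k * (x k * x j) := by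
    intro c0 D0 j x
    rw [add_mul, Finset.sum_mul]
    exact congrArg _ (Finset.sum_congr rfl fun k _ => by ring)
  have main : ∀ t : ℝ,
      (∀ i, (∫ x, b t x i ∂(μ t))
        = (A.mulVec (mt t) + (St t * H.transpose).mulVec
            (fun a => Y t a - H.mulVec (mt t) a)) i) ∧
      (∀ i j, (∫ x, (b t x i * x j + x i * b t x j) ∂(μ t)) + (σ * σ.transpose) i j
          - ((∫ x, b t x i ∂(μ t)) * (∫ x, x j ∂(μ t))
             + (∫ x, x i ∂(μ t)) * (∫ x, b t x j ∂(μ t)))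
        = (A * St t + St t * A.transpose + σ * σ.transpose
            - St t * H.transpose * H * St t) i j) := by
    intro t
    set M : Fin d → ℝ := mt t with hM
    set S : Matrix (Fin d) (Fin d) ℝ := St t with hS
    set Pm : Matrix (Fin d) (Fin d) ℝ
      := Matrix.of (fun i j => ∫ x, x i * x j ∂(μ t)) with hPmdef
    set c : Fin d → ℝ := (S * Hᵀ) *ᵥ (fun a => Y t a - (H *ᵥ M) a / 2) with hc
    set D : Matrix (Fin d) (Fin d) ℝ := A - (2⁻¹ : ℝ) • (S * Hᵀ * H) with hD
    have hMk : ∀ k, M k = ∫ x, x k ∂(μ t) := fun k => rfl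
    have hPmk : ∀ k l, Pm k l = ∫ x, x k * x l ∂(μ t) := fun k l => rfl
    have hSentry : ∀ k l, S k l = Pm k l - M k * M l := fun k l => hSt t k l
    have hPsym : ∀ k l, Pm k l = Pm l k := by
      intro k l
      show (∫ x, x k * x l ∂(μ t)) = ∫ x, x l * x k ∂(μ t)
      exact congrArg _ (funext fun x => mul_comm _ _)
    have hSsym : Sᵀ = S := by
      ext k l
      show S l k = S k l
      rw [hSentry, hSentry, hPsym l k]
      ring
    -- drift is affine
    have hbvec : ∀ x : Fin d → ℝ, b t x = D *ᵥ x + c := by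
      intro x
      show A *ᵥ x + (S * Hᵀ) *ᵥ (fun a => Y t a - ((H *ᵥ x) a + (H *ᵥ M) a) / 2) = _
      have h1 : (fun a => Y t a - ((H *ᵥ x) a + (H *ᵥ M) a) / 2)
          = (fun a => Y t a - (H *ᵥ M) a / 2) - (2⁻¹ : ℝ) • (H *ᵥ x) := by
        funext a; simp [Pi.sub_apply, Pi.smul_apply, smul_eq_mul]; ring
      rw [h1, Matrix.mulVec_sub, Matrix.mulVec_smul, Matrix.mulVec_mulVec,
        hD, Matrix.sub_mulVec, smul_mulVec, hc]
      abel
    have hbi : ∀ (x : Fin d → ℝ) (i : Fin d), b t x i = c i + ∑ k, D i k * x k := by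
      intro x i
      rw [hbvec]
      show (D *ᵥ x) i + c i = _
      rw [add_comm]
      rfl
    -- first moment of the drift
    have hib : ∀ i, (∫ x, b t x i ∂(μ t)) = (D *ᵥ M + c) i := by
      intro i
      simp_rw [hbi]
      rw [integral_affine' (μ t) (hint1 t)]
      show c i + ∑ k, D i k * M k = (D *ᵥ M) i + c i
      rw [add_comm]
      rfl
    -- mean identity
    have hDMc : D *ᵥ M + c = A *ᵥ M + (S * Hᵀ) *ᵥ (fun a => Y t a - (H *ᵥ M) a) := by
      have h2 : (fun a => Y t a - (H *ᵥ M) a)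
          = (fun a => Y t a - (H *ᵥ M) a / 2) - (2⁻¹ : ℝ) • (H *ᵥ M) := by
        funext a; simp [Pi.sub_apply, Pi.smul_apply, smul_eq_mul]; ring
      rw [h2, Matrix.mulVec_sub, Matrix.mulVec_smul, Matrix.mulVec_mulVec,
        hD, Matrix.sub_mulVec, smul_mulVec, hc]
      abel
    refine ⟨fun i => by rw [hib i, hDMc], ?_⟩
    -- second moments of the drift
    have hIb : ∀ i j, Integrable (fun x : Fin d → ℝ => b t x i * x j) (μ t) := by
      intro i j
      simp_rw [hbi, hmulexp]
      exact ((hint1 t j).const_mul _).add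
        (integrable_finset_sum _ fun k _ => (hint2 t k j).const_mul _)
    have hIb2 : ∀ i j, Integrable (fun x : Fin d → ℝ => x i * b t x j) (μ t) := by
      intro i j
      exact (hIb j i).congr (Filter.Eventually.of_forall fun x => mul_comm _ _)
    have hq1 : ∀ i j, (∫ x, b t x i * x j ∂(μ t)) = (D * Pm) i j + c i * M j := by
      intro i j
      simp_rw [hbi]
      rw [integral_affine_mul (μ t) (hint1 t) (hint2 t)]
      rw [Matrix.mul_apply, add_comm]
      rfl
    have hq2 : ∀ i j, (∫ x, x i * b t x j ∂(μ t)) = (Pm * Dᵀ) i j + M i * c j := by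
      intro i j
      rw [show (fun x : Fin d → ℝ => x i * b t x j) = fun x => b t x j * x i from
        funext fun x => mul_comm _ _]
      rw [hq1 j i]
      have hDP : (D * Pm) j i = (Pm * Dᵀ) i j := by
        rw [Matrix.mul_apply, Matrix.mul_apply]
        refine Finset.sum_congr rfl fun k _ => ?_
        rw [Matrix.transpose_apply, hPsym k i]
        ring
      rw [hDP]
      ring
    intro i j
    rw [integral_add (hIb i j) (hIb2 i j), hq1, hq2, hib i, hib j,
      ← hMk j, ← hMk i]
    have e1 : (D * S) i j = (D * Pm) i j - (D *ᵥ M) i * M j := by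
      rw [Matrix.mul_apply, Matrix.mul_apply,
        show (D *ᵥ M) i = ∑ k, D i k * M k from rfl,
        Finset.sum_mul, ← Finset.sum_sub_distrib]
      refine Finset.sum_congr rfl fun k _ => ?_
      rw [hSentry]; ring
    have e2 : (S * Dᵀ) i j = (Pm * Dᵀ) i j - M i * (D *ᵥ M) j := by
      rw [Matrix.mul_apply, Matrix.mul_apply,
        show (D *ᵥ M) j = ∑ k, D j k * M k from rfl,
        Finset.mul_sum, ← Finset.sum_sub_distrib]
      refine Finset.sum_congr rfl fun k _ => ?_
      rw [hSentry, Matrix.transpose_apply]; ring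
    have e3 : (D * S) i j = (A * S) i j - 2⁻¹ * (S * Hᵀ * H * S) i j := by
      rw [hD, Matrix.sub_mul, Matrix.smul_mul]
      simp [Matrix.sub_apply, Matrix.smul_apply, smul_eq_mul]
    have e4 : (S * Dᵀ) i j = (S * Aᵀ) i j - 2⁻¹ * (S * Hᵀ * H * S) i j := by
      have hmm : S * (S * Hᵀ * H)ᵀ = S * Hᵀ * H * S := by
        rw [Matrix.transpose_mul, Matrix.transpose_mul, Matrix.transpose_transpose,
          hSsym, ← Matrix.mul_assoc, ← Matrix.mul_assoc]
      have htr : S * (A - (2⁻¹ : ℝ) • (S * Hᵀ * H))ᵀ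
          = S * Aᵀ - (2⁻¹ : ℝ) • (S * Hᵀ * H * S) := by
        rw [Matrix.transpose_sub, Matrix.transpose_smul, Matrix.mul_sub,
          Matrix.mul_smul, hmm]
      rw [hD, htr]
      simp [Matrix.sub_apply, Matrix.smul_apply, smul_eq_mul]
    simp only [Pi.add_apply, Matrix.add_apply, Matrix.sub_apply, add_mul, mul_add]
    linarith [e1, e2, e3, e4]
  constructor
  · intro t i
    have h := hyp1 t i
    rw [(main t).1 i] at h
    exact h
  · intro t i j
    have hfun : (fun s => St s i j)
        = fun s => (∫ x, x i * x j ∂(μ s)) - mt s i * mt s j :=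
      funext fun s => hSt s i j
    rw [hfun, ← (main t).2 i j]
    exact (hyp2 t i j).sub ((hyp1 t i).mul (hyp1 t j))
end
end
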